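/- Let X be a finite ground set with |X| ≥ k ≥ 1, and let f : 2^X → ℝ be a monotone nondecreasing set function with f(∅) = 0. Suppose ε ≥ 0 satisfies f_j(T) − f_j(S) ≤ ε for all S ⊆ T ⊂ X and j ∈ X \ T, where f_j(S) = f(S ∪ {j}) − f(S). Let S_0 = ∅ and for i = 0, …, k−1 let S_{i+1} = S_i ∪ {j_i}, where j_i ∈ X \ S_i maximizes the marginal gain f_j(S_i) over j ∈ X \ S_i (greedy selection). Then f(S_k) ≥ (1 − 1/e) · (f(S*) − (k−1)·ε), where S* maximizes f over all subsets of X of cardinality at most k. -/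

import Mathlib

/-!
Every element of `S*` outside the current greedy set `Sᵢ` has marginal gain at
most the greedy gain `gᵢ`, and adding the at most `k` such elements one at a time loses at most
`(k - 1)·ε` against adding them in parallel to `Sᵢ`. Hence `f S* - f Sᵢ ≤ k·gᵢ + (k - 1)·ε`, so
the gap `f S* - (k - 1)·ε - f Sᵢ` shrinks by a factor `1 - 1/k` per step, and after `k` steps it
is at most `(1 - 1/k)^k ≤ 1/e` times its initial value.
-/

open Finset

section WeaklySubmodular

variable {α : Type*} [DecidableEq α]

def marginalGain (f : Finset α → ℝ) (j : α) (S : Finset α) : ℝ :=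
  f (insert j S) - f S

def IsWeaklySubmodular (f : Finset α → ℝ) (ε : ℝ) : Prop :=
  ∀ (S T : Finset α) (j : α), S ⊆ T → j ∉ T → marginalGain f j T - marginalGain f j S ≤ ε

variable {f : Finset α → ℝ} {ε : ℝ}

theorem IsWeaklySubmodular.sub_le_sum_marginalGain (hf : IsWeaklySubmodular f ε)
    {S D : Finset α} (hSD : Disjoint S D) (hD : D.Nonempty) :
    f (S ∪ D) - f S ≤ ∑ j ∈ D, marginalGain f j S + (#D - 1) * ε := by
  induction hD using Finset.Nonempty.cons_induction with
  | singleton a =>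
    simp [marginalGain, union_comm S]
  | cons a D ha _ ih =>
    rw [cons_eq_insert, disjoint_insert_right] at hSD
    have haSD : a ∉ S ∪ D := by simp [ha, hSD.1]
    have hweak := hf S (S ∪ D) a subset_union_left haSD
    rw [union_comm S, cons_eq_insert, insert_union, union_comm D, sum_insert ha,
      card_insert_of_notMem ha]
    specialize ih hSD.2
    push_cast
    simp only [marginalGain] at hweak ih ⊢
    linarith

theorem IsWeaklySubmodular.sub_le_mul_marginalGain_add (hf : IsWeaklySubmodular f ε)
    (hmono : Monotone f) (hε : 0 ≤ ε) {k : ℕ} (hk : 1 ≤ k) {S T : Finset α} (hT : #T ≤ k)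
    {j₀ : α} (hj₀ : ∀ j ∉ S, marginalGain f j S ≤ marginalGain f j₀ S) :
    f T - f S ≤ k * marginalGain f j₀ S + (k - 1) * ε := by
  have hk' : (1 : ℝ) ≤ k := by exact_mod_cast hk
  have hgain : 0 ≤ marginalGain f j₀ S := sub_nonneg.2 (hmono (subset_insert j₀ S))
  have hTS : f T ≤ f (S ∪ T \ S) := hmono (by simp)
  rcases (T \ S).eq_empty_or_nonempty with hD | hD
  · rw [hD, union_empty] at hTS
    nlinarith
  have hcard : (#(T \ S) : ℝ) ≤ k := by exact_mod_cast (card_le_card sdiff_subset).trans hT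
  have hsum : ∑ j ∈ T \ S, marginalGain f j S ≤ #(T \ S) * marginalGain f j₀ S := by
    simpa using sum_le_sum fun j hj => hj₀ j (mem_sdiff.1 hj).2
  have htelescope := hf.sub_le_sum_marginalGain disjoint_sdiff hD
  nlinarith

end WeaklySubmodular

theorem le_one_sub_div_mul_of_le_mul_sub {a b k : ℝ} (hk : 0 < k) (h : a ≤ k * (a - b)) :
    b ≤ (1 - 1 / k) * a := by
  have : a / k ≤ a - b := (div_le_iff₀' hk).2 h
  rw [sub_mul, one_mul, one_div_mul_eq_div]
  linarith

theorem stmt_4_general {α : Type*} [DecidableEq α]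
    (f : Finset α → ℝ)
    (k : ℕ) (hk : 1 ≤ k)
    (hmono : ∀ S T : Finset α, S ⊆ T → f S ≤ f T)
    (hempty : f ∅ = 0)
    (ε : ℝ) (hε : 0 ≤ ε)
    (hweak : ∀ (S T : Finset α) (j : α), S ⊆ T → j ∉ T →
      (f (insert j T) - f T) - (f (insert j S) - f S) ≤ ε)
    (Sseq : ℕ → Finset α) (jseq : ℕ → α)
    (hinit : Sseq 0 = ∅)
    (hgreedy : ∀ i < k,
      jseq i ∉ Sseq i ∧
      Sseq (i + 1) = insert (jseq i) (Sseq i) ∧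
      ∀ j ∉ Sseq i,
        f (insert j (Sseq i)) - f (Sseq i) ≤
          f (insert (jseq i) (Sseq i)) - f (Sseq i))
    (Sstar : Finset α) (hstar_card : Sstar.card ≤ k) :
    (1 - 1 / Real.exp 1) * (f Sstar - ((k : ℝ) - 1) * ε) ≤ f (Sseq k) := by
  have hk' : (1 : ℝ) ≤ k := by exact_mod_cast hk
  set gap : ℕ → ℝ := fun i => f Sstar - ((k : ℝ) - 1) * ε - f (Sseq i)
  have hstep : ∀ i < k, gap (i + 1) ≤ (1 - 1 / k) * gap i := by
    intro i hi
    obtain ⟨-, hSucc, hmax⟩ := hgreedy i hi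
    have hbound := IsWeaklySubmodular.sub_le_mul_marginalGain_add hweak hmono hε hk hstar_card hmax
    refine le_one_sub_div_mul_of_le_mul_sub (by positivity) ?_
    simp only [gap, marginalGain, ← hSucc] at hbound ⊢
    linarith
  have hratio : 0 ≤ 1 - 1 / (k : ℝ) := sub_nonneg.2 ((div_le_one (by positivity)).2 hk')
  have hgap := le_geom hratio k hstep
  have hexp : (1 - 1 / (k : ℝ)) ^ k ≤ 1 / Real.exp 1 := by
    simpa [Real.exp_neg] using Real.one_sub_div_pow_le_exp_neg hk'
  have hfk : 0 ≤ f (Sseq k) := hempty ▸ hmono ∅ _ (empty_subset _)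
  have he : 1 / Real.exp 1 ≤ 1 := by simp [inv_le_one_iff₀]
  simp only [gap, hinit, hempty, sub_zero] at hgap
  rcases le_total 0 (f Sstar - ((k : ℝ) - 1) * ε) with h | h <;>
    nlinarith [pow_nonneg hratio k]

/-- Greedy guarantee for monotone functions with additive
weak-submodularity bound `ε ≥ 0`: the greedy set of size `k` satisfies
`f(S_k) ≥ (1 − 1/e) · (f(S*) − (k−1)·ε)` where `S*` is an optimal subset of
cardinality at most `k`. -/
theorem stmt_4 {α : Type*} [Fintype α] [DecidableEq α]
    (f : Finset α → ℝ)
    (k : ℕ) (hk : 1 ≤ k) (hcard : k ≤ Fintype.card α)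
    (hmono : ∀ S T : Finset α, S ⊆ T → f S ≤ f T)
    (hempty : f ∅ = 0)
    (ε : ℝ) (hε : 0 ≤ ε)
    (hweak : ∀ (S T : Finset α) (j : α), S ⊆ T → j ∉ T →
      (f (insert j T) - f T) - (f (insert j S) - f S) ≤ ε)
    (Sseq : ℕ → Finset α) (jseq : ℕ → α)
    (hinit : Sseq 0 = ∅)
    (hgreedy : ∀ i < k,
      jseq i ∉ Sseq i ∧
      Sseq (i + 1) = insert (jseq i) (Sseq i) ∧
      ∀ j ∉ Sseq i,
        f (insert j (Sseq i)) - f (Sseq i) ≤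
          f (insert (jseq i) (Sseq i)) - f (Sseq i))
    (Sstar : Finset α) (hstar_card : Sstar.card ≤ k)
    (hstar_opt : ∀ T : Finset α, T.card ≤ k → f T ≤ f Sstar) :
    (1 - 1 / Real.exp 1) * (f Sstar - ((k : ℝ) - 1) * ε) ≤ f (Sseq k) :=
  stmt_4_general f k hk hmono hempty ε hε hweak Sseq jseq hinit hgreedy Sstar hstar_card
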